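/- arXiv:1903.02661 — 3 statements merged into one kernel-verified Lean document; each statement's English description precedes it below -/
import Mathlib

section
/- With R defined as γᵀ(e − E·I)⁻¹γ and A⁻¹ := e − E·I − γ L⁰ γᵀ, one has the channel-level equivalence (R⁻¹ − L⁰)⁻¹ = γᵀ A γ, assuming all the indicated inverses exist. -/
open Matrix

namespace Matrix

variable {n m α : Type*} [Fintype n] [DecidableEq n] [Fintype m] [DecidableEq m] [CommRing α]

/-- Insert `B * B⁻¹` with `B = M - V * L * U`: then `U * M⁻¹ * B = (1 - U * M⁻¹ * V * L) * U`. -/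
theorem mul_inv_mul_eq_one_sub_mul_mul_mul_inv_sub_mul (M : Matrix n n α) (U : Matrix m n α)
    (V : Matrix n m α) (L : Matrix m m α) (hM : IsUnit M.det)
    (hB : IsUnit (M - V * L * U).det) :
    U * M⁻¹ * V = (1 - U * M⁻¹ * V * L) * (U * (M - V * L * U)⁻¹ * V) := by
  calc U * M⁻¹ * V = U * M⁻¹ * ((M - V * L * U) * (M - V * L * U)⁻¹) * V := by
        rw [mul_nonsing_inv _ hB, Matrix.mul_one]
    _ = (1 - U * M⁻¹ * V * L) * (U * (M - V * L * U)⁻¹ * V) := by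
        simp only [Matrix.sub_mul, Matrix.mul_sub, Matrix.mul_assoc, Matrix.one_mul,
          nonsing_inv_mul_cancel_left _ _ hM]

theorem inv_sub_eq_mul_inv_sub_mul_mul (M : Matrix n n α) (U : Matrix m n α)
    (V : Matrix n m α) (L : Matrix m m α) (hM : IsUnit M.det)
    (hB : IsUnit (M - V * L * U).det) (hR : IsUnit (U * M⁻¹ * V).det) :
    ((U * M⁻¹ * V)⁻¹ - L)⁻¹ = U * (M - V * L * U)⁻¹ * V := by
  set R := U * M⁻¹ * V
  set X := U * (M - V * L * U)⁻¹ * V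
  have hRX : R = (1 - R * L) * X := mul_inv_mul_eq_one_sub_mul_mul_mul_inv_sub_mul M U V L hM hB
  clear_value R X
  refine inv_eq_right_inv ?_
  calc (R⁻¹ - L) * X = R⁻¹ * ((1 - R * L) * X) := by
        rw [← Matrix.mul_assoc, Matrix.mul_sub, Matrix.mul_one, ← Matrix.mul_assoc,
          nonsing_inv_mul _ hR, Matrix.one_mul]
    _ = 1 := by rw [← hRX, nonsing_inv_mul _ hR]

end Matrix

theorem channel_level_equivalence_general {NL Nc : Type*} [Fintype NL] [Fintype Nc]
    [DecidableEq NL] [DecidableEq Nc]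
    (e : Matrix NL NL ℂ) (γ : Matrix NL Nc ℂ) (L0 : Matrix Nc Nc ℂ) (E : ℂ)
    (h_e : IsUnit (e - E • (1 : Matrix NL NL ℂ)).det)
    (hR : IsUnit (γᵀ * (e - E • (1 : Matrix NL NL ℂ))⁻¹ * γ).det)
    (hA : IsUnit (e - E • (1 : Matrix NL NL ℂ) - γ * L0 * γᵀ).det) :
    ((γᵀ * (e - E • (1 : Matrix NL NL ℂ))⁻¹ * γ)⁻¹ - L0)⁻¹
      = γᵀ * (e - E • (1 : Matrix NL NL ℂ) - γ * L0 * γᵀ)⁻¹ * γ :=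
  inv_sub_eq_mul_inv_sub_mul_mul _ γᵀ γ L0 h_e hA hR

/-- Channel-level equivalence defining the Kapur-Peierls operator:
`(R⁻¹ − L⁰)⁻¹ = γᵀ A γ` with `R = γᵀ (e − E·1)⁻¹ γ` and `A⁻¹ = e − E·1 − γ L⁰ γᵀ`. -/
theorem channel_level_equivalence {NL Nc : Type*} [Fintype NL] [Fintype Nc]
    [DecidableEq NL] [DecidableEq Nc]
    (e : Matrix NL NL ℂ) (he : e.IsDiag) (γ : Matrix NL Nc ℂ) (L0 : Matrix Nc Nc ℂ) (E : ℂ)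
    (h_e : IsUnit (e - E • (1 : Matrix NL NL ℂ)).det)
    (hR : IsUnit (γᵀ * (e - E • (1 : Matrix NL NL ℂ))⁻¹ * γ).det)
    (hRL : IsUnit ((γᵀ * (e - E • (1 : Matrix NL NL ℂ))⁻¹ * γ)⁻¹ - L0).det)
    (hA : IsUnit (e - E • (1 : Matrix NL NL ℂ) - γ * L0 * γᵀ).det) :
    ((γᵀ * (e - E • (1 : Matrix NL NL ℂ))⁻¹ * γ)⁻¹ - L0)⁻¹
      = γᵀ * (e - E • (1 : Matrix NL NL ℂ) - γ * L0 * γᵀ)⁻¹ * γ :=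
  channel_level_equivalence_general e γ L0 E h_e hR hA
end

section
/- (Diagonal divisibility and capped multiplicities, scalar-pole version) Let M be an m×n complex matrix and D(z) an n×n diagonal matrix of rational functions D_jj(z) = R_j(z)/P_j(z) where each P_j is a polynomial with simple roots. Let Q(z) be the product of the distinct P_j, each taken with multiplicity equal to the minimum of its multiplicity of occurrence among the diagonal entries and m. Then Q(z)·det(M D(z) Mᵀ) is a polynomial in z. -/
open Matrix Polynomial
open scoped Classical

/-!
Expanding `det (M D Mᵀ)` multilinearly in its rows writes it as a sum over maps
`f : Fin m → Fin n` of `(∏ i, M i (f i) * D (f i)) * det (rows f of Mᵀ)`. The minor vanishes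
unless `f` is injective, and for injective `f` the denominator `∏ i, P (f i)` contains each
distinct `P j` at most `min (mult P j) m` times, so it divides `Q`.
-/

open Finset

theorem Matrix.det_mul_eq_sum_prod_mul_det_submatrix {R m n : Type*} [CommRing R]
    [Fintype m] [DecidableEq m] [Fintype n] (A : Matrix m n R) (B : Matrix n m R) :
    (A * B).det = ∑ f : m → n, (∏ i, A i (f i)) * (B.submatrix f id).det := by
  have hrows : (fun i => (A * B) i) = fun i => ∑ j, A i j • (fun k => B j k : m → R) := by
    funext i k
    simp [Matrix.mul_apply]
  change detRowAlternating (fun i => (A * B) i) = _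
  rw [hrows]
  refine (detRowAlternating.toMultilinearMap.map_sum
    fun i j => A i j • (fun k => B j k : m → R)).trans (sum_congr rfl fun f _ => ?_)
  rw [MultilinearMap.map_smul_univ, smul_eq_mul]
  rfl

theorem Matrix.det_submatrix_eq_zero_of_not_injective {R m n : Type*} [CommRing R]
    [Fintype m] [DecidableEq m] (B : Matrix n m R) {f : m → n} (hf : ¬ Function.Injective f) :
    (B.submatrix f id).det = 0 := by
  obtain ⟨a, b, hab, hne⟩ := Function.not_injective_iff.mp hf
  exact det_zero_of_row_eq hne (funext fun k => by simp only [submatrix_apply, hab])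

section CappedProduct

variable {α κ : Type*} [CommMonoid α] [DecidableEq α] [Fintype κ]

def cappedProduct (P : κ → α) (k : ℕ) : α :=
  ∏ p ∈ univ.image P, p ^ min #{j | P j = p} k

theorem prod_dvd_cappedProduct (P : κ → α) {S : Finset κ} {k : ℕ} (hS : #S ≤ k) :
    ∏ j ∈ S, P j ∣ cappedProduct P k :=
  calc ∏ j ∈ S, P j = ∏ p ∈ S.image P, p ^ #{j ∈ S | P j = p} := prod_comp id P
    _ ∣ ∏ p ∈ S.image P, p ^ min #{j | P j = p} k :=
        prod_dvd_prod_of_dvd _ _ fun p _ => pow_dvd_pow p <|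
          le_min (card_le_card (filter_subset_filter _ (subset_univ S)))
            ((card_filter_le _ _).trans hS)
    _ ∣ cappedProduct P k := prod_dvd_prod_of_subset _ _ _ (image_subset_image (subset_univ S))

theorem prod_comp_dvd_cappedProduct {ι : Type*} [Fintype ι] (P : κ → α) {f : ι → κ}
    (hf : Function.Injective f) {k : ℕ} (hk : Fintype.card ι ≤ k) :
    ∏ i, P (f i) ∣ cappedProduct P k := by
  rw [← prod_image hf.injOn]
  exact prod_dvd_cappedProduct P (by rwa [card_image_of_injective _ hf, card_univ])

end CappedProduct

theorem Polynomial.exists_eval_mul_prod_div_eq {K ι : Type*} [Field K] [Fintype ι]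
    {Q : K[X]} (P R : ι → K[X]) (h : ∏ i, P i ∣ Q) :
    ∃ q : K[X], ∀ z, (∀ i, (P i).eval z ≠ 0) →
      Q.eval z * ∏ i, (R i).eval z / (P i).eval z = q.eval z := by
  obtain ⟨g, rfl⟩ := h
  refine ⟨g * ∏ i, R i, fun z hz => ?_⟩
  have hPz : ∏ i, (P i).eval z ≠ 0 := prod_ne_zero_iff.mpr fun i _ => hz i
  simp only [eval_mul, eval_prod, prod_div_distrib]
  field_simp

theorem diagonal_divisibility_capped_multiplicities_general (m n : ℕ)
    (M : Matrix (Fin m) (Fin n) ℂ) (R P : Fin n → Polynomial ℂ) :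
    ∃ q : Polynomial ℂ,
      ∀ z : ℂ, (∀ j, (P j).eval z ≠ 0) →
        ((Finset.univ.image P).prod fun p =>
            p ^ min (Finset.univ.filter (fun j => P j = p)).card m).eval z
          * (M * Matrix.diagonal (fun j => (R j).eval z / (P j).eval z) * Mᵀ).det
        = q.eval z := by
  change ∃ q : ℂ[X], ∀ z : ℂ, (∀ j, (P j).eval z ≠ 0) → (cappedProduct P m).eval z *
    (M * diagonal (fun j => (R j).eval z / (P j).eval z) * Mᵀ).det = q.eval z
  have hterm : ∀ f : Fin m → Fin n, ∃ q : ℂ[X], ∀ z : ℂ, (∀ j, (P j).eval z ≠ 0) →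
      (cappedProduct P m).eval z * ((∏ i, M i (f i) * ((R (f i)).eval z / (P (f i)).eval z))
        * (Mᵀ.submatrix f id).det) = q.eval z := by
    intro f
    by_cases hf : Function.Injective f
    · obtain ⟨q, hq⟩ := exists_eval_mul_prod_div_eq (P ∘ f) (R ∘ f)
        (prod_comp_dvd_cappedProduct P hf (Fintype.card_fin m).le)
      refine ⟨C ((∏ i, M i (f i)) * (Mᵀ.submatrix f id).det) * q, fun z hz => ?_⟩
      rw [eval_mul, eval_C, ← hq z fun i => hz (f i), prod_mul_distrib]
      simp only [Function.comp_apply]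
      ring
    · refine ⟨0, fun z _ => ?_⟩
      rw [det_submatrix_eq_zero_of_not_injective Mᵀ hf, mul_zero, mul_zero, eval_zero]
  choose q hq using hterm
  refine ⟨∑ f, q f, fun z hz => ?_⟩
  rw [det_mul_eq_sum_prod_mul_det_submatrix, mul_sum, eval_finsetSum]
  simp only [mul_diagonal]
  exact sum_congr rfl fun f _ => hq f z hz

/-- Diagonal divisibility and capped multiplicities: for `M ∈ ℂ^{m×n}` and
`D(z) = diag(R_j(z)/P_j(z))` with each `P_j` having simple roots, the rational
function `Q(z)·det(M D(z) Mᵀ)` is a polynomial, where `Q` is the product of the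
distinct `P_j`, each with multiplicity `min(multiplicity of occurrence, m)`. -/
theorem diagonal_divisibility_capped_multiplicities (m n : ℕ)
    (M : Matrix (Fin m) (Fin n) ℂ) (R P : Fin n → Polynomial ℂ)
    (hP0 : ∀ j, P j ≠ 0) (hPsq : ∀ j, Squarefree (P j)) :
    ∃ q : Polynomial ℂ,
      ∀ z : ℂ, (∀ j, (P j).eval z ≠ 0) →
        ((Finset.univ.image P).prod fun p =>
            p ^ min (Finset.univ.filter (fun j => P j = p)).card m).eval z
          * (M * Matrix.diagonal (fun j => (R j).eval z / (P j).eval z) * Mᵀ).det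
        = q.eval z :=
  diagonal_divisibility_capped_multiplicities_general m n M R P
end

section
/- Pole cancellation in the scattering matrix (one-channel case): let O, I : ℂ → ℂ be holomorphic with constant Wronskian ρ-scaled relation O'(ω)I(ω) − I'(ω)O(ω) = 2i for all ω, and suppose O(ω₀) = 0 with O'(ω₀) ≠ 0. Define R_L near ω₀ so that R_L(ρ)·(O(ρ)·g(ρ) − ρO'(ρ)) = O(ρ) for some holomorphic g (the Kapur-Peierls relation). Then the function U(ρ) = O(ρ)⁻¹·(I(ρ) + 2i·ρ·R_L(ρ)·O(ρ)⁻¹) extends holomorphically across ω₀, i.e. the apparent pole at ω₀ is removable. -/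
open Complex Filter

/-!
With `D = O g − ρ O'`, the Wronskian gives `(I g − ρ I') O = I D + ρ (O'I − I'O) = I D + 2iρ`,
so off the zeros of `O` the function `U` equals `(I g − ρ I') / D`. Since
`D(ω₀) = −ω₀ O'(ω₀) ≠ 0`, this quotient is analytic at `ω₀`; and the zero of `O` at `ω₀` is
simple, hence isolated.
-/

theorem kapurPeierls_quotient_eq {K : Type*} [Field K] {o o' i i' g ρ c : K}
    (hW : o' * i - i' * o = c) (ho : o ≠ 0) (hD : o * g - ρ * o' ≠ 0) :
    (i + c * ρ * (o / (o * g - ρ * o')) / o) / o = (i * g - ρ * i') / (o * g - ρ * o') := by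
  rw [div_eq_div_iff ho hD, mul_div_assoc, div_div_cancel_left' ho]
  field_simp
  linear_combination (-ρ) * hW

/-- Pole cancellation in the scattering matrix (one-channel case): if `O, I` are
holomorphic near `ω₀ ≠ 0` with constant Wronskian `O'I − I'O = 2i`, `O(ω₀) = 0` with
`O'(ω₀) ≠ 0`, and `R_L(ρ) = O(ρ)/(O(ρ)g(ρ) − ρO'(ρ))` for holomorphic `g`, then
`U(ρ) = O(ρ)⁻¹(I(ρ) + 2iρ R_L(ρ) O(ρ)⁻¹)` extends holomorphically across `ω₀`. -/
theorem scattering_pole_cancellation (ω₀ : ℂ) (hω : ω₀ ≠ 0) (O I g : ℂ → ℂ)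
    (hO : AnalyticAt ℂ O ω₀) (hI : AnalyticAt ℂ I ω₀) (hg : AnalyticAt ℂ g ω₀)
    (hW : ∀ᶠ ρ in nhds ω₀, deriv O ρ * I ρ - deriv I ρ * O ρ = 2 * Complex.I)
    (h0 : O ω₀ = 0) (h1 : deriv O ω₀ ≠ 0) :
    ∃ V : ℂ → ℂ, AnalyticAt ℂ V ω₀ ∧
      ∀ᶠ ρ in nhdsWithin ω₀ {ω₀}ᶜ,
        V ρ = (I ρ + 2 * Complex.I * ρ
            * (O ρ / (O ρ * g ρ - ρ * deriv O ρ)) / O ρ) / O ρ := by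
  set D : ℂ → ℂ := fun ρ => O ρ * g ρ - ρ * deriv O ρ
  have hD_analytic : AnalyticAt ℂ D ω₀ := by fun_prop
  have hD_ne : D ω₀ ≠ 0 := by simpa [D, h0] using mul_ne_zero hω h1
  have hO_ne : ∀ᶠ ρ in nhdsWithin ω₀ {ω₀}ᶜ, O ρ ≠ 0 :=
    hO.differentiableAt.hasDerivAt.eventually_ne h1
  refine ⟨fun ρ => (I ρ * g ρ - ρ * deriv I ρ) / D ρ, by fun_prop (disch := exact hD_ne), ?_⟩
  filter_upwards [hO_ne, nhdsWithin_le_nhds (hD_analytic.continuousAt.eventually_ne hD_ne),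
    nhdsWithin_le_nhds hW] with ρ hOρ hDρ hWρ
  exact (kapurPeierls_quotient_eq hWρ hOρ hDρ).symm
end
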